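/- In the graph G'' of the dominating-set TJ-to-TS construction, every dominating set of G'' of size k+1 contains exactly one vertex from V^i ∪ {f^i} for each i ∈ {1,…,k}, exactly one vertex from {z_init, z_fin}, and no other vertices (in particular, no vertex gar^i, gar'^i, z_gar, z'_gar, x_v^{i,j} or v'). -/
import Mathlib


/-- `I` is an independent set of the graph `G`. -/
def IsIndepFinset {α : Type*} (G : SimpleGraph α) (I : Finset α) : Prop :=
  ∀ u ∈ I, ∀ v ∈ I, ¬ G.Adj u v

/-- `D` is a dominating set of the graph `G`. -/
def IsDomFinset {α : Type*} (G : SimpleGraph α) (D : Finset α) : Prop :=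
  ∀ x : α, x ∈ D ∨ ∃ y ∈ D, G.Adj x y

/-- A token-jumping step: some token jumps from `u ∈ I` to `w ∉ I`. -/
def TJStep {α : Type*} [DecidableEq α] (I J : Finset α) : Prop :=
  ∃ u ∈ I, ∃ w, w ∉ I ∧ J = insert w (I.erase u)

/-- A token-sliding step: some token slides from `u ∈ I` along an edge to `w ∉ I`. -/
def TSStep {α : Type*} [DecidableEq α] (G : SimpleGraph α) (I J : Finset α) : Prop :=
  ∃ u ∈ I, ∃ w, w ∉ I ∧ G.Adj u w ∧ J = insert w (I.erase u)

/-- A partitioned token-jumping step with respect to token sets `Q`. -/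
def PTJStep {α : Type*} {ι : Type*} [DecidableEq α] (Q : ι → Set α) (I J : Finset α) : Prop :=
  ∃ u ∈ I, ∃ w, w ∉ I ∧ (∃ i, u ∈ Q i ∧ w ∈ Q i) ∧ J = insert w (I.erase u)

/-- A partitioned token-sliding step with respect to token sets `Q`. -/
def PTSStep {α : Type*} {ι : Type*} [DecidableEq α] (G : SimpleGraph α) (Q : ι → Set α)
    (I J : Finset α) : Prop :=
  ∃ u ∈ I, ∃ w, w ∉ I ∧ G.Adj u w ∧ (∃ i, u ∈ Q i ∧ w ∈ Q i) ∧ J = insert w (I.erase u)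

/-- There is a reconfiguration sequence `A = f 0, f 1, …, f ℓ = B` of length `ℓ`, all of whose
members satisfy `Valid`, with consecutive members related by `Step`. -/
def AdmitsSeq {α : Type*} (Valid : Finset α → Prop) (Step : Finset α → Finset α → Prop)
    (A B : Finset α) (ℓ : ℕ) : Prop :=
  ∃ f : ℕ → Finset α, f 0 = A ∧ f ℓ = B ∧ (∀ i, i ≤ ℓ → Valid (f i)) ∧
    ∀ i, i < ℓ → Step (f i) (f (i + 1))

/-- Ordered pairs of distinct indices `i ≠ j` in `{1,…,k}`, indexing the vertices `x_v^{i,j}`. -/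
abbrev DistinctPair (k : ℕ) : Type := {p : Fin k × Fin k // p.1 ≠ p.2}

/-- Vertices of the graph `G''` of the dominating-set TJ-to-TS construction. -/
inductive GVfour (V : Type*) (k : ℕ) : Type _ where
  | copy : V → Fin k → GVfour V k      -- the copies v^i
  | gar : Fin k → GVfour V k           -- gar^i
  | gar' : Fin k → GVfour V k          -- gar'^i
  | x : V → DistinctPair k → GVfour V k -- x_v^{i,j} for i ≠ j
  | orig : V → GVfour V k              -- v'
  | fv : Fin k → GVfour V k            -- f^i
  | zinit : GVfour V k
  | zfin : GVfour V k
  | zgar : GVfour V k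
  | zgar' : GVfour V k
deriving DecidableEq

/-- The edges of `G''`. -/
def relFour {V : Type*} {k : ℕ} (G : SimpleGraph V) (Dfin : Finset V) :
    GVfour V k → GVfour V k → Prop
  | .copy _ i, .copy _ j => i = j
  | .gar i, .copy _ j => i = j
  | .gar' i, .copy _ j => i = j
  | .x v p, .copy w j => (j = p.val.1 ∨ j = p.val.2) ∧ w ≠ v
  | .orig v, .copy w _ => G.Adj v w ∨ v = w
  | .fv i, .gar j => i = j
  | .fv i, .gar' j => i = j
  | .fv i, .copy v j => i = j ∧ v ∈ Dfin
  | .fv _, .zinit => True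
  | .zgar, .zinit => True
  | .zgar, .zfin => True
  | .zgar', .zinit => True
  | .zgar', .zfin => True
  | .zinit, .zfin => True
  | .zfin, .orig _ => True
  | .zfin, .copy _ _ => True
  | _, _ => False

/-- The graph `G''` of the dominating-set TJ-to-TS construction. -/
def GppFour {V : Type*} (k : ℕ) (G : SimpleGraph V) (Dfin : Finset V) :
    SimpleGraph (GVfour V k) :=
  SimpleGraph.fromRel (relFour G Dfin)

def blkFour {V : Type*} {k : ℕ} : GVfour V k → Option (Fin k ⊕ Unit)
  | .copy _ i => some (.inl i)
  | .gar i => some (.inl i)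
  | .gar' i => some (.inl i)
  | .x _ _ => none
  | .orig _ => none
  | .fv i => some (.inl i)
  | .zinit => some (.inr ())
  | .zfin => some (.inr ())
  | .zgar => some (.inr ())
  | .zgar' => some (.inr ())

lemma cover_gar {V : Type*} {k : ℕ} (G : SimpleGraph V) (Dfin : Finset V) (i : Fin k)
    (y : GVfour V k) (h : y = .gar i ∨ (GppFour k G Dfin).Adj (.gar i) y) :
    y = .gar i ∨ y = .fv i ∨ ∃ v, y = .copy v i := by
  rcases h with h | h
  · exact Or.inl h
  · rw [GppFour, SimpleGraph.fromRel_adj] at h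
    obtain ⟨-, h⟩ := h
    cases y <;> simp_all [relFour]


lemma cover_gar' {V : Type*} {k : ℕ} (G : SimpleGraph V) (Dfin : Finset V) (i : Fin k)
    (y : GVfour V k) (h : y = .gar' i ∨ (GppFour k G Dfin).Adj (.gar' i) y) :
    y = .gar' i ∨ y = .fv i ∨ ∃ v, y = .copy v i := by
  rcases h with h | h
  · exact Or.inl h
  · rw [GppFour, SimpleGraph.fromRel_adj] at h
    obtain ⟨-, h⟩ := h
    cases y <;> simp_all [relFour]

lemma cover_zgar {V : Type*} {k : ℕ} (G : SimpleGraph V) (Dfin : Finset V)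
    (y : GVfour V k) (h : y = .zgar ∨ (GppFour k G Dfin).Adj .zgar y) :
    y = .zgar ∨ y = .zinit ∨ y = .zfin := by
  rcases h with h | h
  · exact Or.inl h
  · rw [GppFour, SimpleGraph.fromRel_adj] at h
    obtain ⟨-, h⟩ := h
    cases y <;> simp_all [relFour]

lemma cover_zgar' {V : Type*} {k : ℕ} (G : SimpleGraph V) (Dfin : Finset V)
    (y : GVfour V k) (h : y = .zgar' ∨ (GppFour k G Dfin).Adj .zgar' y) :
    y = .zgar' ∨ y = .zinit ∨ y = .zfin := by
  rcases h with h | h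
  · exact Or.inl h
  · rw [GppFour, SimpleGraph.fromRel_adj] at h
    obtain ⟨-, h⟩ := h
    cases y <;> simp_all [relFour]

theorem stmt15' {V : Type*} [Fintype V] [DecidableEq V] (G : SimpleGraph V) (k : ℕ)
    (Dfin : Finset V) (hcf : Dfin.card = k)
    (D : Finset (GVfour V k)) (hD : ∀ x, x ∈ D ∨ ∃ y ∈ D, (GppFour k G Dfin).Adj x y)
    (hcard : D.card = k + 1) :
    (∀ i : Fin k, ∃! z, z ∈ D ∧ ((∃ v, z = GVfour.copy v i) ∨ z = GVfour.fv i)) ∧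
    (∃! z, z ∈ D ∧ (z = GVfour.zinit ∨ z = GVfour.zfin)) ∧
    (∀ z ∈ D, (∃ v i, z = GVfour.copy v i) ∨ (∃ i, z = GVfour.fv i) ∨
      z = GVfour.zinit ∨ z = GVfour.zfin) := by
  classical
  have hdom : ∀ b : Fin k ⊕ Unit, ∃ y, y ∈ D ∧ blkFour y = some b := by
    intro b
    cases b with
    | inl i =>
      obtain ⟨y, hy, hcov⟩ : ∃ y ∈ D, y = .gar i ∨ (GppFour k G Dfin).Adj (.gar i) y := by
        rcases hD (.gar i) with h | ⟨y, hy, ha⟩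
        exacts [⟨_, h, Or.inl rfl⟩, ⟨y, hy, Or.inr ha⟩]
      refine ⟨y, hy, ?_⟩
      rcases cover_gar G Dfin i y hcov with rfl | rfl | ⟨v, rfl⟩ <;> rfl
    | inr u =>
      obtain ⟨y, hy, hcov⟩ : ∃ y ∈ D, y = .zgar ∨ (GppFour k G Dfin).Adj .zgar y := by
        rcases hD .zgar with h | ⟨y, hy, ha⟩
        exacts [⟨_, h, Or.inl rfl⟩, ⟨y, hy, Or.inr ha⟩]
      refine ⟨y, hy, ?_⟩
      rcases cover_zgar G Dfin y hcov with rfl | rfl | rfl <;> rfl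
  choose σ hσD hσb using hdom
  have hinj : Function.Injective σ := by
    intro a b h
    have h1 := hσb a
    rw [h, hσb b] at h1
    exact (Option.some_injective _ h1).symm
  have himg : Finset.image σ Finset.univ ⊆ D := by
    intro d hd
    simp only [Finset.mem_image] at hd
    obtain ⟨b, -, rfl⟩ := hd
    exact hσD b
  have hcardimg : (Finset.image σ Finset.univ).card = k + 1 := by
    rw [Finset.card_image_of_injective _ hinj, Finset.card_univ, Fintype.card_sum,
      Fintype.card_fin, Fintype.card_unit]
  have hDeq : Finset.image σ Finset.univ = D :=
    Finset.eq_of_subset_of_card_le himg (by rw [hcard, hcardimg])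
  have hmem : ∀ d ∈ D, ∃ b, σ b = d := by
    intro d hd
    rw [← hDeq] at hd
    simpa using hd
  have huniq : ∀ d ∈ D, ∀ b, blkFour d = some b → d = σ b := by
    intro d hd b hb
    obtain ⟨b', rfl⟩ := hmem d hd
    have h1 := hσb b'
    rw [hb] at h1
    rw [Option.some_injective _ h1]
  have hgood : ∀ i : Fin k, σ (.inl i) = .fv i ∨ ∃ v, σ (.inl i) = GVfour.copy v i := by
    intro i
    obtain ⟨y1, hy1, hcov1⟩ : ∃ y ∈ D, y = .gar i ∨ (GppFour k G Dfin).Adj (.gar i) y := by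
      rcases hD (.gar i) with h | ⟨y, hy, ha⟩
      exacts [⟨_, h, Or.inl rfl⟩, ⟨y, hy, Or.inr ha⟩]
    obtain ⟨y2, hy2, hcov2⟩ : ∃ y ∈ D, y = .gar' i ∨ (GppFour k G Dfin).Adj (.gar' i) y := by
      rcases hD (.gar' i) with h | ⟨y, hy, ha⟩
      exacts [⟨_, h, Or.inl rfl⟩, ⟨y, hy, Or.inr ha⟩]
    have hc1 := cover_gar G Dfin i y1 hcov1
    have hc2 := cover_gar' G Dfin i y2 hcov2
    have he1 : y1 = σ (.inl i) := by
      apply huniq y1 hy1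
      rcases hc1 with rfl | rfl | ⟨v, rfl⟩ <;> rfl
    have he2 : y2 = σ (.inl i) := by
      apply huniq y2 hy2
      rcases hc2 with rfl | rfl | ⟨v, rfl⟩ <;> rfl
    rw [he1] at hc1
    rw [he2] at hc2
    rcases hc1 with h1 | h1 | ⟨v, h1⟩
    · rcases hc2 with h2 | h2 | ⟨v, h2⟩ <;> rw [h1] at h2 <;> simp at h2
    · exact Or.inl h1
    · exact Or.inr ⟨v, h1⟩
  have hz : σ (.inr ()) = .zinit ∨ σ (.inr ()) = .zfin := by
    obtain ⟨y1, hy1, hcov1⟩ : ∃ y ∈ D, y = .zgar ∨ (GppFour k G Dfin).Adj .zgar y := by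
      rcases hD .zgar with h | ⟨y, hy, ha⟩
      exacts [⟨_, h, Or.inl rfl⟩, ⟨y, hy, Or.inr ha⟩]
    obtain ⟨y2, hy2, hcov2⟩ : ∃ y ∈ D, y = .zgar' ∨ (GppFour k G Dfin).Adj .zgar' y := by
      rcases hD .zgar' with h | ⟨y, hy, ha⟩
      exacts [⟨_, h, Or.inl rfl⟩, ⟨y, hy, Or.inr ha⟩]
    have hc1 := cover_zgar G Dfin y1 hcov1
    have hc2 := cover_zgar' G Dfin y2 hcov2
    have he1 : y1 = σ (.inr ()) := by
      apply huniq y1 hy1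
      rcases hc1 with rfl | rfl | rfl <;> rfl
    have he2 : y2 = σ (.inr ()) := by
      apply huniq y2 hy2
      rcases hc2 with rfl | rfl | rfl <;> rfl
    rw [he1] at hc1
    rw [he2] at hc2
    rcases hc1 with h1 | h1 | h1
    · rcases hc2 with h2 | h2 | h2 <;> rw [h1] at h2 <;> simp at h2
    · exact Or.inl h1
    · exact Or.inr h1
  refine ⟨?_, ?_, ?_⟩
  · intro i
    refine ⟨σ (.inl i), ⟨hσD _, ?_⟩, ?_⟩
    · rcases hgood i with h | ⟨v, h⟩
      exacts [Or.inr h, Or.inl ⟨v, h⟩]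
    · rintro z ⟨hzD, hzc⟩
      apply huniq z hzD
      rcases hzc with ⟨v, rfl⟩ | rfl <;> rfl
  · refine ⟨σ (.inr ()), ⟨hσD _, hz⟩, ?_⟩
    rintro z ⟨hzD, hzc⟩
    apply huniq z hzD
    rcases hzc with rfl | rfl <;> rfl
  · intro z hzD
    obtain ⟨b, rfl⟩ := hmem z hzD
    cases b with
    | inl i =>
      rcases hgood i with h | ⟨v, h⟩
      · exact Or.inr (Or.inl ⟨i, h⟩)
      · exact Or.inl ⟨v, i, h⟩
    | inr u =>
      cases u
      rcases hz with h | h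
      · exact Or.inr (Or.inr (Or.inl h))
      · exact Or.inr (Or.inr (Or.inr h))

/-- every dominating set of `G''` of size `k+1` contains exactly one vertex from
`V^i ∪ {f^i}` for each `i`, exactly one vertex from `{z_init, z_fin}`, and no other vertices. -/
theorem stmt15 {V : Type*} [Fintype V] [DecidableEq V] (G : SimpleGraph V) (k : ℕ)
    (Dfin : Finset V) (hDfin : IsDomFinset G Dfin) (hcf : Dfin.card = k)
    (D : Finset (GVfour V k)) (hD : IsDomFinset (GppFour k G Dfin) D)
    (hcard : D.card = k + 1) :
    (∀ i : Fin k, ∃! z, z ∈ D ∧ ((∃ v, z = GVfour.copy v i) ∨ z = GVfour.fv i)) ∧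
    (∃! z, z ∈ D ∧ (z = GVfour.zinit ∨ z = GVfour.zfin)) ∧
    (∀ z ∈ D, (∃ v i, z = GVfour.copy v i) ∨ (∃ i, z = GVfour.fv i) ∨
      z = GVfour.zinit ∨ z = GVfour.zfin) := by
  exact stmt15' G k Dfin hcf D hD hcard
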